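/- arXiv:2111.04597 — 5 statements merged into one kernel-verified Lean document; each statement's English description precedes it below -/
import Mathlib

section
/- Suppose there exists λ̃ ∈ ℝ_+^{|𝒜|} and a classifier φ̃ with φ̃ ∈ argmin_φ F_{λ̃}(φ), such that R_k(φ̃) = α_k for all k ∈ 𝒜 (all NP constraints active). Then strong duality holds: sup_{λ∈ℝ_+^{|𝒜|}} inf_φ F_λ(φ) = inf_φ sup_{λ∈ℝ_+^{|𝒜|}} F_λ(φ), and φ̃ is optimal for the NPMC problem. -/
/-!
Because every constraint is active at `φ̃`, the penalty term vanishes there, so `F_λ(φ̃) = J(φ̃)`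
for every `λ`. Hence `(λ̃, φ̃)` is a saddle point of the Lagrangian: `F_λ(φ̃) ≤ F_{λ̃}(φ̃) ≤ F_{λ̃}(φ)`.
A saddle point closes the weak-duality gap, and on a feasible `φ` the penalty is nonpositive, so
`J(φ̃) = F_{λ̃}(φ̃) ≤ F_{λ̃}(φ) ≤ J(φ)`.
-/

section SaddlePoint

variable {ι κ α : Type*} [CompleteLattice α]

theorem iSup₂_iInf_le_iInf_iSup₂ (S : Set ι) (f : ι → κ → α) :
    ⨆ l ∈ S, ⨅ x, f l x ≤ ⨅ x, ⨆ l ∈ S, f l x :=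
  iSup₂_le fun l hl => le_iInf fun x => (iInf_le _ x).trans (le_iSup₂_of_le l hl le_rfl)

theorem iSup₂_iInf_eq_iInf_iSup₂_of_saddle {S : Set ι} {f : ι → κ → α} {l₀ : ι} {x₀ : κ}
    (hl₀ : l₀ ∈ S) (hmax : ∀ l ∈ S, f l x₀ ≤ f l₀ x₀) (hmin : ∀ x, f l₀ x₀ ≤ f l₀ x) :
    ⨆ l ∈ S, ⨅ x, f l x = ⨅ x, ⨆ l ∈ S, f l x := by
  refine le_antisymm (iSup₂_iInf_le_iInf_iSup₂ S f) ?_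
  calc ⨅ x, ⨆ l ∈ S, f l x ≤ ⨆ l ∈ S, f l x₀ := iInf_le _ x₀
    _ ≤ f l₀ x₀ := iSup₂_le hmax
    _ ≤ ⨅ x, f l₀ x := le_iInf hmin
    _ ≤ ⨆ l ∈ S, ⨅ x, f l x := le_iSup₂_of_le l₀ hl₀ le_rfl

end SaddlePoint

theorem Finset.sum_mul_sub_nonpos {ι : Type*} (s : Finset ι) {l r a : ι → ℝ}
    (hl : ∀ k ∈ s, 0 ≤ l k) (hr : ∀ k ∈ s, r k ≤ a k) :
    ∑ k ∈ s, l k * (r k - a k) ≤ 0 :=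
  Finset.sum_nonpos fun k hk => mul_nonpos_of_nonneg_of_nonpos (hl k hk) (by linarith [hr k hk])

theorem stmt6_general {Φ : Type*} {K : ℕ} (A : Finset (Fin K))
    (R : Φ → Fin K → ℝ)
    (α : Fin K → ℝ)
    (J : Φ → ℝ)
    (F : (Fin K → ℝ) → Φ → ℝ)
    (hF : ∀ l φ, F l φ = ∑ k ∈ A, l k * (R φ k - α k) + J φ)
    (ltil : Fin K → ℝ) (hltil : ∀ k, 0 ≤ ltil k)
    (φtil : Φ) (hmin : ∀ φ : Φ, F ltil φtil ≤ F ltil φ)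
    (hactive : ∀ k ∈ A, R φtil k = α k) :
    ((⨆ l ∈ {l : Fin K → ℝ | ∀ k, 0 ≤ l k}, ⨅ φ : Φ, (F l φ : EReal))
        = ⨅ φ : Φ, ⨆ l ∈ {l : Fin K → ℝ | ∀ k, 0 ≤ l k}, (F l φ : EReal))
    ∧ (∀ k ∈ A, R φtil k ≤ α k)
    ∧ ∀ φ : Φ, (∀ k ∈ A, R φ k ≤ α k) → J φtil ≤ J φ := by
  have hslack : ∀ l, F l φtil = J φtil := fun l => by
    rw [hF, Finset.sum_eq_zero fun k hk => by rw [hactive k hk, sub_self, mul_zero], zero_add]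
  have hpenalty : ∀ φ, (∀ k ∈ A, R φ k ≤ α k) → F ltil φ ≤ J φ := fun φ hfeas => by
    rw [hF]
    linarith [A.sum_mul_sub_nonpos (fun k _ => hltil k) hfeas]
  refine ⟨?_, fun k hk => (hactive k hk).le, fun φ hfeas => ?_⟩
  · refine iSup₂_iInf_eq_iInf_iSup₂_of_saddle (show ∀ k, 0 ≤ ltil k from hltil)
      (fun l _ => ?_) (fun φ => EReal.coe_le_coe_iff.2 (hmin φ))
    rw [hslack l, hslack ltil]
  · calc J φtil = F ltil φtil := (hslack ltil).symm
      _ ≤ F ltil φ := hmin φ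
      _ ≤ J φ := hpenalty φ hfeas

/-- If some `λ̃ ≥ 0` admits a minimizer `φ̃` of `F_{λ̃}` with all NP constraints active
(`R_k(φ̃) = α_k` for `k ∈ 𝒜`), then strong duality holds and `φ̃` is NPMC-optimal. -/
theorem stmt6 {Φ : Type*} {K : ℕ} (A : Finset (Fin K))
    (R : Φ → Fin K → ℝ) (hR : ∀ φ k, R φ k ∈ Set.Icc (0:ℝ) 1)
    (w α : Fin K → ℝ) (hw : ∀ k, 0 ≤ w k) (hα : ∀ k, α k ∈ Set.Ico (0:ℝ) 1)
    (J : Φ → ℝ) (hJ : ∀ φ, J φ = ∑ k, w k * R φ k)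
    (F : (Fin K → ℝ) → Φ → ℝ)
    (hF : ∀ l φ, F l φ = ∑ k ∈ A, l k * (R φ k - α k) + J φ)
    (ltil : Fin K → ℝ) (hltil : ∀ k, 0 ≤ ltil k)
    (φtil : Φ) (hmin : ∀ φ : Φ, F ltil φtil ≤ F ltil φ)
    (hactive : ∀ k ∈ A, R φtil k = α k) :
    ((⨆ l ∈ {l : Fin K → ℝ | ∀ k, 0 ≤ l k}, ⨅ φ : Φ, (F l φ : EReal))
        = ⨅ φ : Φ, ⨆ l ∈ {l : Fin K → ℝ | ∀ k, 0 ≤ l k}, (F l φ : EReal))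
    ∧ (∀ k ∈ A, R φtil k ≤ α k)
    ∧ ∀ φ : Φ, (∀ k ∈ A, R φ k ≤ α k) → J φtil ≤ J φ :=
  stmt6_general A R α J F hF ltil hltil φtil hmin hactive
end

section
/- Let c_k(λ) = w_k/π_k for k ∉ 𝒜 and c_k(λ) = (w_k+λ_k)/π_k for k ∈ 𝒜. Then for any classifier φ, the Lagrangian satisfies the identity F_λ(φ) = −E_X[ c_{φ(X)}(λ) · P(Y = φ(X) | X) ] + Σ_{k=1}^K w_k + Σ_{k∈𝒜} λ_k (1 − α_k). Consequently the classifier φ*_λ(x) = argmax_k { c_k(λ) P(Y=k|X=x) } minimizes F_λ over all classifiers. -/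
/-!
Writing `π_k R_k(φ) = π_k − ∫_{φ = k} η_k` by Bayes' rule and multiplying by `c_k`, the weights
of the Lagrangian become `c_k π_k`, and `∑_k c_k ∫_{φ = k} η_k = E[c_{φ(X)} η_{φ(X)}(X)]`.
This gives the identity; the posterior-argmax classifier maximizes the integrand pointwise,
hence minimizes `F_λ`.
-/

open MeasureTheory ProbabilityTheory Set

section ClassAssignment

variable {X ι : Type*} [Fintype ι]

theorem apply_comp_eq_sum_indicator {β : Type*} [AddCommMonoid β] (f : X → ι → β)
    (φ : X → ι) (x : X) :
    f x (φ x) = ∑ k, {x | φ x = k}.indicator (fun x => f x k) x := by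
  rw [Finset.sum_eq_single (φ x)]
  · simp
  · intro k _ hk
    exact indicator_of_notMem (Ne.symm hk) _
  · simp

variable [MeasurableSpace X]

theorem integrable_apply_of_nonneg_of_sum_eq_one {ν : Measure X} [IsFiniteMeasure ν]
    {η : X → ι → ℝ} (hηm : ∀ k, Measurable fun x => η x k) (hη0 : ∀ x k, 0 ≤ η x k)
    (hη1 : ∀ x, ∑ k, η x k = 1) (k : ι) : Integrable (fun x => η x k) ν := by
  refine Integrable.mono' (integrable_const 1) (hηm k).aestronglyMeasurable
    (Filter.Eventually.of_forall fun x => ?_)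
  rw [Real.norm_eq_abs, abs_of_nonneg (hη0 x k), ← hη1 x]
  exact Finset.single_le_sum (fun j _ => hη0 x j) (Finset.mem_univ k)

variable [MeasurableSpace ι] [MeasurableSingletonClass ι] {ν : Measure X} {f : X → ι → ℝ}
  {φ : X → ι}

theorem integrable_apply_comp (hf : ∀ k, Integrable (fun x => f x k) ν) (hφ : Measurable φ) :
    Integrable (fun x => f x (φ x)) ν := by
  simp_rw [apply_comp_eq_sum_indicator f φ]
  exact integrable_finsetSum _ fun k _ => (hf k).indicator (hφ (measurableSet_singleton k))

theorem integral_apply_comp (hf : ∀ k, Integrable (fun x => f x k) ν) (hφ : Measurable φ) :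
    ∫ x, f x (φ x) ∂ν = ∑ k, ∫ x in {x | φ x = k}, f x k ∂ν := by
  have hs : ∀ k, MeasurableSet {x | φ x = k} := fun k => hφ (measurableSet_singleton k)
  simp_rw [apply_comp_eq_sum_indicator f φ]
  rw [integral_finsetSum _ fun k _ => (hf k).indicator (hs k)]
  exact Finset.sum_congr rfl fun k _ => integral_indicator (hs k)

end ClassAssignment

theorem toReal_mul_toReal_cond_fst_ne {X ι : Type*} [MeasurableSpace X] [MeasurableSpace ι]
    [MeasurableSingletonClass ι] (μ : Measure (X × ι)) [IsFiniteMeasure μ] {k : ι}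
    {η : X → ℝ} (hη : Integrable η (μ.map Prod.fst))
    (hBayes : ∀ s : Set X, MeasurableSet s →
      (μ (s ×ˢ ({k} : Set ι))).toReal = ∫ x in s, η x ∂(μ.map Prod.fst))
    {φ : X → ι} (hφ : Measurable φ) :
    (μ (univ ×ˢ ({k} : Set ι))).toReal * (μ[|univ ×ˢ ({k} : Set ι)] {p | φ p.1 ≠ k}).toReal
      = (μ (univ ×ˢ ({k} : Set ι))).toReal - ∫ x in {x | φ x = k}, η x ∂(μ.map Prod.fst) := by
  have hB : MeasurableSet {x | φ x = k} := hφ (measurableSet_singleton k)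
  have hinter : univ ×ˢ ({k} : Set ι) ∩ {p : X × ι | φ p.1 ≠ k} = {x | φ x = k}ᶜ ×ˢ {k} := by
    ext ⟨x, y⟩
    simp only [mem_inter_iff, mem_prod, mem_univ, mem_singleton_iff, mem_ofPred_eq,
      mem_compl_iff, true_and]
    exact and_comm
  rw [mul_comm, ← ENNReal.toReal_mul,
    cond_mul_eq_inter (MeasurableSet.univ.prod (measurableSet_singleton k)), hinter,
    hBayes _ hB.compl, hBayes _ MeasurableSet.univ, Measure.restrict_univ,
    ← integral_add_compl hB hη]
  ring

theorem Finset.sum_sdiff_add_sum_eq_sum {ι M : Type*} [Fintype ι] [DecidableEq ι]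
    [AddCommMonoid M] {A : Finset ι} {f g h : ι → M} (hf : ∀ k ∉ A, h k = f k)
    (hg : ∀ k ∈ A, h k = g k) :
    ∑ k ∈ Finset.univ \ A, f k + ∑ k ∈ A, g k = ∑ k, h k := by
  rw [← Finset.sum_sdiff (Finset.subset_univ A)]
  congr 1
  · exact Finset.sum_congr rfl fun k hk => (hf k (Finset.mem_sdiff.1 hk).2).symm
  · exact Finset.sum_congr rfl fun k hk => (hg k hk).symm

theorem stmt8_general
    {𝒳 : Type*} [MeasurableSpace 𝒳] {K : ℕ}
    (μ : Measure (𝒳 × Fin K)) [IsProbabilityMeasure μ]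
    (A : Finset (Fin K)) (w α : Fin K → ℝ)
    (π : Fin K → ℝ) (hπpos : ∀ k, 0 < π k)
    (hπ : ∀ k : Fin K, π k = (μ (Set.univ ×ˢ ({k} : Set (Fin K)))).toReal)
    (η : 𝒳 → Fin K → ℝ) (hηm : ∀ k, Measurable fun x => η x k)
    (hη0 : ∀ x k, 0 ≤ η x k) (hη1 : ∀ x, ∑ k, η x k = 1)
    (hBayes : ∀ k : Fin K, ∀ s : Set 𝒳, MeasurableSet s →
      (μ (s ×ˢ ({k} : Set (Fin K)))).toReal = ∫ x in s, η x k ∂(μ.map Prod.fst))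
    (l : Fin K → ℝ)
    (c : Fin K → ℝ)
    (hcdef : ∀ k, c k = if k ∈ A then (w k + l k) / π k else w k / π k)
    (Rk : (𝒳 → Fin K) → Fin K → ℝ)
    (hRk : ∀ φ k, Rk φ k =
      ((μ[|Set.univ ×ˢ ({k} : Set (Fin K))]) {p : 𝒳 × Fin K | φ p.1 ≠ k}).toReal)
    (F : (𝒳 → Fin K) → ℝ)
    (hFdef : ∀ φ, F φ = ∑ k ∈ Finset.univ \ A, w k * Rk φ k
      + ∑ k ∈ A, (w k + l k) * Rk φ k - ∑ k ∈ A, l k * α k)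
    (φs : 𝒳 → Fin K) (hφs : Measurable φs)
    (hargmax : ∀ x j, c j * η x j ≤ c (φs x) * η x (φs x)) :
    (∀ φ : 𝒳 → Fin K, Measurable φ →
      F φ = -(∫ x, c (φ x) * η x (φ x) ∂(μ.map Prod.fst))
        + ∑ k, w k + ∑ k ∈ A, l k * (1 - α k))
    ∧ ∀ φ : 𝒳 → Fin K, Measurable φ → F φs ≤ F φ := by
  set ν := μ.map Prod.fst
  have : IsProbabilityMeasure ν := Measure.isProbabilityMeasure_map measurable_fst.aemeasurable
  have hη : ∀ k, Integrable (fun x => η x k) ν :=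
    integrable_apply_of_nonneg_of_sum_eq_one hηm hη0 hη1
  have hcη : ∀ k, Integrable (fun x => c k * η x k) ν := fun k => (hη k).const_mul (c k)
  have hcπ : ∀ k, c k * π k = if k ∈ A then w k + l k else w k := fun k => by
    rw [hcdef k]
    split <;> exact div_mul_cancel₀ _ (hπpos k).ne'
  have hF : ∀ φ : 𝒳 → Fin K, Measurable φ → F φ = -(∫ x, c (φ x) * η x (φ x) ∂ν)
      + ∑ k, w k + ∑ k ∈ A, l k * (1 - α k) := by
    intro φ hφ
    have hrisk : ∀ k, π k * Rk φ k = π k - ∫ x in {x | φ x = k}, η x k ∂ν := fun k => by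
      rw [hπ k, hRk]
      exact toReal_mul_toReal_cond_fst_ne μ (hη k) (hBayes k) hφ
    have hweighted : ∑ k ∈ Finset.univ \ A, w k * Rk φ k + ∑ k ∈ A, (w k + l k) * Rk φ k
        = ∑ k, c k * π k - ∫ x, c (φ x) * η x (φ x) ∂ν := calc
      _ = ∑ k, c k * (π k * Rk φ k) := Finset.sum_sdiff_add_sum_eq_sum
          (fun k hk => by rw [← mul_assoc, hcπ, if_neg hk])
          (fun k hk => by rw [← mul_assoc, hcπ, if_pos hk])
      _ = ∑ k, (c k * π k - ∫ x in {x | φ x = k}, c k * η x k ∂ν) := by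
          simp_rw [hrisk, mul_sub, integral_const_mul]
      _ = _ := by rw [Finset.sum_sub_distrib, integral_apply_comp hcη hφ]
    have htotal : ∑ k, c k * π k = ∑ k ∈ Finset.univ \ A, w k + ∑ k ∈ A, (w k + l k) :=
      (Finset.sum_sdiff_add_sum_eq_sum (fun k hk => by rw [hcπ, if_neg hk])
        (fun k hk => by rw [hcπ, if_pos hk])).symm
    rw [hFdef, hweighted, htotal, Finset.sum_add_distrib, ← add_assoc,
      Finset.sum_sdiff (Finset.subset_univ A)]
    simp only [mul_sub, mul_one, Finset.sum_sub_distrib]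
    ring
  refine ⟨hF, fun φ hφ => ?_⟩
  have hle := integral_mono (integrable_apply_comp hcη hφ) (integrable_apply_comp hcη hφs)
    fun x => hargmax x (φ x)
  rw [hF φ hφ, hF φs hφs]
  linarith

/-- Lagrangian identity and cost-sensitive minimizer: with costs
`c_k = w_k/π_k` (`k ∉ 𝒜`) and `c_k = (w_k+λ_k)/π_k` (`k ∈ 𝒜`), the NPMC Lagrangian
satisfies `F_λ(φ) = −E_X[c_{φ(X)} P(Y=φ(X)|X)] + ∑_k w_k + ∑_{k∈𝒜} λ_k(1−α_k)`,
so the posterior-argmax classifier `φ*_λ` minimizes `F_λ`. -/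
theorem stmt8
    {𝒳 : Type*} [MeasurableSpace 𝒳] {K : ℕ}
    (μ : Measure (𝒳 × Fin K)) [IsProbabilityMeasure μ]
    (A : Finset (Fin K)) (w α : Fin K → ℝ)
    (hw : ∀ k, 0 ≤ w k) (hα : ∀ k, α k ∈ Set.Ico (0:ℝ) 1)
    (π : Fin K → ℝ) (hπpos : ∀ k, 0 < π k)
    (hπ : ∀ k : Fin K, π k = (μ (Set.univ ×ˢ ({k} : Set (Fin K)))).toReal)
    (η : 𝒳 → Fin K → ℝ) (hηm : ∀ k, Measurable fun x => η x k)
    (hη0 : ∀ x k, 0 ≤ η x k) (hη1 : ∀ x, ∑ k, η x k = 1)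
    (hBayes : ∀ k : Fin K, ∀ s : Set 𝒳, MeasurableSet s →
      (μ (s ×ˢ ({k} : Set (Fin K)))).toReal = ∫ x in s, η x k ∂(μ.map Prod.fst))
    (l : Fin K → ℝ) (hl : ∀ k, 0 ≤ l k)
    (c : Fin K → ℝ)
    (hcdef : ∀ k, c k = if k ∈ A then (w k + l k) / π k else w k / π k)
    (Rk : (𝒳 → Fin K) → Fin K → ℝ)
    (hRk : ∀ φ k, Rk φ k =
      ((μ[|Set.univ ×ˢ ({k} : Set (Fin K))]) {p : 𝒳 × Fin K | φ p.1 ≠ k}).toReal)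
    (F : (𝒳 → Fin K) → ℝ)
    (hFdef : ∀ φ, F φ = ∑ k ∈ Finset.univ \ A, w k * Rk φ k
      + ∑ k ∈ A, (w k + l k) * Rk φ k - ∑ k ∈ A, l k * α k)
    (φs : 𝒳 → Fin K) (hφs : Measurable φs)
    (hargmax : ∀ x j, c j * η x j ≤ c (φs x) * η x (φs x)) :
    (∀ φ : 𝒳 → Fin K, Measurable φ →
      F φ = -(∫ x, c (φ x) * η x (φ x) ∂(μ.map Prod.fst))
        + ∑ k, w k + ∑ k ∈ A, l k * (1 - α k))
    ∧ ∀ φ : 𝒳 → Fin K, Measurable φ → F φs ≤ F φ :=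
  stmt8_general μ A w α π hπpos hπ η hηm hη0 hη1 hBayes l c hcdef Rk hRk F hFdef φs hφs hargmax
end

section
/- Under the margin condition P(|g^{(k)}(X)| ≤ t | Y=k) ≤ C₀ t^γ̄ for all 0 ≤ t ≤ C (with γ̄ > 0, C ∈ (0,1)), if additionally P( |ĝ^{(k)}(X) − g^{(k)}(X)| > t | Y=k ) ≤ ε(t) for all t > 0, then for any δ ∈ (0,1) and t = (δ/2)^{1/γ̄} ≤ C, we have: |R_k(φ̂) − R_k(φ*)| > δ implies P( |ĝ^{(k)}(X) − g^{(k)}(X)| > t | Y=k ) > δ/2, where R_k(φ) = P(φ(X)≠k | Y=k) for classifiers induced by the respective scores. -/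
open MeasureTheory Set

/-- Margin-condition implication: under the margin condition
`P(|g(X)| ≤ t | Y=k) ≤ t^γ̄` for `0 ≤ t ≤ C`, with `t = (δ/2)^{1/γ̄} ≤ C`, a deviation
`|R_k(φ̂) − R_k(φ*)| > δ` forces `P(|ĝ(X) − g(X)| > t | Y=k) > δ/2`. -/
theorem stmt10
    {𝒳 : Type*} [MeasurableSpace 𝒳] {K : ℕ} (k : Fin K)
    (ν : Measure 𝒳) [IsProbabilityMeasure ν]
    (g gh : 𝒳 → ℝ) (γ C : ℝ) (hγ : 0 < γ) (hC : C ∈ Set.Ioo (0:ℝ) 1)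
    (hmargin : ∀ t : ℝ, 0 ≤ t → t ≤ C →
      (ν {x | |g x| ≤ t}).toReal ≤ Real.rpow t γ)
    (ε : ℝ → ℝ)
    (htail : ∀ t : ℝ, 0 < t → (ν {x | t < |gh x - g x|}).toReal ≤ ε t)
    (φs φh : 𝒳 → Fin K)
    (hφs : ∀ x, φs x ≠ k ↔ g x < 0)
    (hφh : ∀ x, φh x ≠ k ↔ gh x < 0)
    (δ : ℝ) (hδ : δ ∈ Set.Ioo (0:ℝ) 1)
    (t : ℝ) (ht : t = Real.rpow (δ / 2) (1 / γ)) (htC : t ≤ C) :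
    δ < |(ν {x | φh x ≠ k}).toReal - (ν {x | φs x ≠ k}).toReal| →
      δ / 2 < (ν {x | t < |gh x - g x|}).toReal := by
  intro hgap
  have hδ2 : 0 < δ / 2 := by linarith [hδ.1]
  have htpos : 0 < t := by
    rw [ht]; exact Real.rpow_pos_of_pos hδ2 _
  have htγ : Real.rpow t γ = δ / 2 := by
    rw [ht]
    show ((δ / 2 : ℝ) ^ (1 / γ)) ^ γ = δ / 2
    rw [← Real.rpow_mul (le_of_lt hδ2), one_div_mul_cancel (ne_of_gt hγ),
      Real.rpow_one]
  -- set abbreviations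
  set A := {x | φh x ≠ k} with hA
  set B := {x | φs x ≠ k} with hB
  set M := {x | |g x| ≤ t} with hM
  set T := {x | t < |gh x - g x|} with hT
  have hsub1 : A ⊆ B ∪ (M ∪ T) := by
    intro x hx
    by_cases hxB : x ∈ B
    · exact Or.inl hxB
    · right
      have hgh : gh x < 0 := (hφh x).mp hx
      have hg : 0 ≤ g x := not_lt.mp (fun h => hxB ((hφs x).mpr h))
      by_cases hMx : |g x| ≤ t
      · exact Or.inl hMx
      · refine Or.inr ?_
        have : t < g x := by
          rw [abs_of_nonneg hg] at hMx; exact not_le.mp hMx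
        show t < |gh x - g x|
        rw [abs_sub_comm, abs_of_pos (by linarith)]
        linarith
  have hsub2 : B ⊆ A ∪ (M ∪ T) := by
    intro x hx
    by_cases hxA : x ∈ A
    · exact Or.inl hxA
    · right
      have hg : g x < 0 := (hφs x).mp hx
      have hgh : 0 ≤ gh x := not_lt.mp (fun h => hxA ((hφh x).mpr h))
      by_cases hMx : |g x| ≤ t
      · exact Or.inl hMx
      · refine Or.inr ?_
        have : t < -g x := by
          rw [abs_of_neg hg] at hMx; exact not_le.mp hMx
        show t < |gh x - g x|
        rw [abs_of_pos (by linarith)]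
        linarith
  have hfin : ∀ s : Set 𝒳, ν s ≠ ⊤ := fun s => (measure_lt_top ν s).ne
  have key : ∀ (S U : Set 𝒳), S ⊆ U ∪ (M ∪ T) →
      (ν S).toReal ≤ (ν U).toReal + ((ν M).toReal + (ν T).toReal) := by
    intro S U hSU
    have h1 : ν S ≤ ν U + (ν M + ν T) :=
      le_trans (measure_mono hSU)
        (le_trans (measure_union_le _ _)
          (add_le_add (le_refl _) (measure_union_le _ _)))
    have := ENNReal.toReal_mono (by
      simp [ENNReal.add_ne_top, hfin]) h1
    rwa [ENNReal.toReal_add (hfin _) (ENNReal.add_ne_top.mpr ⟨hfin _, hfin _⟩),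
      ENNReal.toReal_add (hfin _) (hfin _)] at this
  have k1 := key A B hsub1
  have k2 := key B A hsub2
  have hMle : (ν M).toReal ≤ δ / 2 := by
    rw [← htγ]; exact hmargin t (le_of_lt htpos) htC
  have habs : |(ν A).toReal - (ν B).toReal| ≤ (ν M).toReal + (ν T).toReal := by
    rw [abs_sub_le_iff]; constructor <;> linarith
  linarith [lt_of_lt_of_le hgap habs]
end

section
/- Suppose the posterior is multinomial-logistic: P(Y=k|X=x) = exp(β_k^T x)/Σ_{j=1}^K exp(β_j^T x) with β_K = 0, all c_k > 0, X has a density on ℝ^p bounded by M, and for each j ≤ K−1 the linear functional β_j^T X has a density bounded by M on ℝ. Let φ_K(x) = c_K P(Y=K|X=x) − max_{j≤K−1} c_j P(Y=j|X=x). Then there exist constants C₁ > 0 and t₀ ∈ (0,1) such that for all 0 ≤ t ≤ t₀, P(|φ_K(X)| ≤ t) ≤ C₁ t. -/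
/-!
Write `z_j = β_jᵀx` (so `z_K = 0`), `m = max_{j<K} c_j e^{z_j}` and `D = Σ_j e^{z_j}`. Then
`φ_K = (c_K - m) / D`, and since every `e^{z_j} ≤ m / c_j` we get `D ≤ 1 + κ' m` with
`κ' = Σ_{j<K} 1/c_j`. Hence `|φ_K| ≤ t` forces `|c_K - m| ≤ t (1 + κ' m)`, and for small `t` the
Lipschitz bound `log y - log x ≤ (y - x)/x` turns this into `|log m - log c_K| ≤ 3 t κ` with
`κ = 1/c_K + κ'`. As `m = c_j e^{z_j}` for some `j`, the score `z_j` lies in an interval of length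
`6 t κ` around `log c_K - log c_j`, an event of probability at most `6 M t κ` by the density bound
on `β_jᵀX`; a union bound over the `K` competitors finishes the proof.
-/

open MeasureTheory Set ENNReal Real Finset

lemma Real.log_sub_log_le_sub_div {x y : ℝ} (hx : 0 < x) (hy : 0 < y) :
    log y - log x ≤ (y - x) / x := by
  have := log_le_sub_one_of_pos (div_pos hy hx)
  rw [log_div hy.ne' hx.ne'] at this
  rwa [sub_div, div_self hx.ne']

lemma abs_log_sub_log_le_of_abs_sub_le {a m t α : ℝ} (ha : 0 < a) (hm : 0 < m) (ht : 0 ≤ t)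
    (hα : 0 ≤ α) (hsmall : t * (a⁻¹ + α) ≤ 1 / 2) (h : |a - m| ≤ t * (1 + α * m)) :
    |log m - log a| ≤ 3 * t * (a⁻¹ + α) := by
  obtain ⟨u, rfl, hu⟩ : ∃ u, t = u * a ∧ 0 ≤ u :=
    ⟨t / a, (div_mul_cancel₀ t ha.ne').symm, div_nonneg ht ha.le⟩
  obtain ⟨v, hv_def, hv⟩ : ∃ v, v = u * a * α ∧ 0 ≤ v := ⟨_, rfl, by positivity⟩
  have hsmall' : u + v ≤ 1 / 2 := by
    rwa [mul_add, mul_inv_cancel_right₀ ha.ne', ← hv_def] at hsmall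
  obtain ⟨hlo, hhi⟩ := abs_le.1 h
  have hm_le : m ≤ 3 * a := by nlinarith
  have hm_ge : a ≤ 3 * m := by nlinarith
  rw [mul_assoc, mul_add, mul_inv_cancel_right₀ ha.ne', ← hv_def, abs_le]
  constructor
  · have hlog := Real.log_sub_log_le_sub_div hm ha
    have hratio : (a - m) / m ≤ 3 * (u + v) := by
      rw [div_le_iff₀ hm]; nlinarith
    linarith
  · have hlog := Real.log_sub_log_le_sub_div ha hm
    have hratio : (m - a) / a ≤ 3 * (u + v) := by
      rw [div_le_iff₀ ha]; nlinarith
    linarith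

section Softmax

variable {ι : Type*} [Fintype ι]

noncomputable def softmax (z : ι → ℝ) (k : ι) : ℝ := exp (z k) / ∑ j, exp (z j)

lemma mul_softmax_sub_sup'_mul_softmax {z : ι → ℝ} {r : ι} (hz : z r = 0) (c : ι → ℝ)
    (s : Finset ι) (hs : s.Nonempty) :
    c r * softmax z r - s.sup' hs (fun j => c j * softmax z j)
      = (c r - s.sup' hs (fun j => c j * exp (z j))) / ∑ j, exp (z j) := by
  have hD : 0 ≤ ∑ j, exp (z j) := sum_nonneg fun j _ => (exp_pos _).le
  simp only [softmax, ← mul_div_assoc]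
  rw [← sup'_div₀ hD, hz, exp_zero, mul_one, sub_div]

variable [DecidableEq ι]

lemma sum_exp_le_one_add_mul_sup' {z : ι → ℝ} {r : ι} (hz : z r = 0) {c : ι → ℝ}
    (hc : ∀ j ∈ univ.erase r, 0 < c j) (hs : (univ.erase r).Nonempty) :
    ∑ j, exp (z j) ≤ 1 + (∑ j ∈ univ.erase r, (c j)⁻¹) *
      (univ.erase r).sup' hs (fun j => c j * exp (z j)) := by
  rw [← add_sum_erase _ _ (mem_univ r), hz, exp_zero, sum_mul]
  gcongr with j hj
  calc exp (z j) = (c j)⁻¹ * (c j * exp (z j)) := by field_simp [(hc j hj).ne']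
    _ ≤ _ := by gcongr; exacts [(inv_pos.2 (hc j hj)).le, le_sup' (fun j => c j * exp (z j)) hj]

lemma exists_mem_closedBall_of_abs_margin_le {z : ι → ℝ} {r : ι} (hz : z r = 0) {c : ι → ℝ}
    (hc : ∀ k, 0 < c k) (hs : (univ.erase r).Nonempty) {t : ℝ} (ht : 0 ≤ t)
    (hsmall : t * ((c r)⁻¹ + ∑ j ∈ univ.erase r, (c j)⁻¹) ≤ 1 / 2)
    (h : |c r * softmax z r - (univ.erase r).sup' hs (fun j => c j * softmax z j)| ≤ t) :
    ∃ j ∈ univ.erase r, z j ∈ Metric.closedBall (log (c r) - log (c j))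
      (3 * t * ((c r)⁻¹ + ∑ j ∈ univ.erase r, (c j)⁻¹)) := by
  obtain ⟨j, hj, hmj⟩ := exists_mem_eq_sup' hs (fun j => c j * exp (z j))
  set m := (univ.erase r).sup' hs (fun j => c j * exp (z j))
  have hD : 0 < ∑ j, exp (z j) := sum_pos (fun j _ => exp_pos _) ⟨r, mem_univ r⟩
  rw [mul_softmax_sub_sup'_mul_softmax hz, abs_div, abs_of_pos hD, div_le_iff₀ hD] at h
  have hmargin : |c r - m| ≤ t * (1 + (∑ j ∈ univ.erase r, (c j)⁻¹) * m) :=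
    h.trans (mul_le_mul_of_nonneg_left
      (sum_exp_le_one_add_mul_sup' hz (fun j _ => hc j) hs) ht)
  have hm : 0 < m := hmj ▸ mul_pos (hc j) (exp_pos _)
  refine ⟨j, hj, ?_⟩
  have hlog := abs_log_sub_log_le_of_abs_sub_le (hc r) hm ht
    (sum_nonneg fun j _ => (inv_pos.2 (hc j)).le) hsmall hmargin
  rw [hmj, log_mul (hc j).ne' (exp_pos _).ne', log_exp] at hlog
  rw [Metric.mem_closedBall, Real.dist_eq]
  convert hlog using 2
  ring

end Softmax

lemma measure_preimage_closedBall_le {Ω : Type*} [MeasurableSpace Ω] {ν : Measure Ω}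
    {f : Ω → ℝ} (hf : Measurable f) {g : ℝ → ℝ≥0∞} {M : ℝ}
    (hg : ν.map f = volume.withDensity g) (hgM : ∀ s, g s ≤ ENNReal.ofReal M) (a ρ : ℝ) :
    ν (f ⁻¹' Metric.closedBall a ρ) ≤ ENNReal.ofReal M * ENNReal.ofReal (2 * ρ) := by
  rw [← Measure.map_apply hf Metric.isClosed_closedBall.measurableSet, hg,
    withDensity_apply _ Metric.isClosed_closedBall.measurableSet]
  calc ∫⁻ s in Metric.closedBall a ρ, g s ≤ ∫⁻ _ in Metric.closedBall a ρ, ENNReal.ofReal M :=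
        lintegral_mono hgM
    _ = ENNReal.ofReal M * ENNReal.ofReal (2 * ρ) := by
        rw [setLIntegral_const, Real.volume_closedBall]

lemma measure_biUnion_preimage_closedBall_le {Ω ι : Type*} [MeasurableSpace Ω]
    {ν : Measure Ω} (s : Finset ι) {f : ι → Ω → ℝ} (hf : ∀ j ∈ s, Measurable (f j))
    {M : ℝ} (hM : 0 ≤ M) (hdens : ∀ j ∈ s, ∃ g : ℝ → ℝ≥0∞,
      ν.map (f j) = volume.withDensity g ∧ ∀ x, g x ≤ ENNReal.ofReal M)
    (a : ι → ℝ) (ρ : ℝ) :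
    ν (⋃ j ∈ s, f j ⁻¹' Metric.closedBall (a j) ρ) ≤ ENNReal.ofReal (#s * M * (2 * ρ)) := by
  calc ν (⋃ j ∈ s, f j ⁻¹' Metric.closedBall (a j) ρ)
      ≤ ∑ j ∈ s, ν (f j ⁻¹' Metric.closedBall (a j) ρ) := measure_biUnion_finset_le _ _
    _ ≤ ∑ _j ∈ s, ENNReal.ofReal M * ENNReal.ofReal (2 * ρ) := sum_le_sum fun j hj => by
        obtain ⟨g, hg, hgM⟩ := hdens j hj
        exact measure_preimage_closedBall_le (hf j hj) hg hgM _ _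
    _ = ENNReal.ofReal (#s * M * (2 * ρ)) := by
        rw [sum_const, nsmul_eq_mul, ← ENNReal.ofReal_natCast, ← ENNReal.ofReal_mul hM,
          ← ENNReal.ofReal_mul (Nat.cast_nonneg _), mul_assoc]

theorem stmt13_general {p K : ℕ}
    (M : ℝ) (hM : 0 < M)
    (β : Fin (K + 1) → Fin p → ℝ) (hβlast : β (Fin.last K) = 0)
    (c : Fin (K + 1) → ℝ) (hc : ∀ k, 0 < c k)
    (ν : Measure (Fin p → ℝ)) [IsProbabilityMeasure ν]
    (post : (Fin p → ℝ) → Fin (K + 1) → ℝ)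
    (hpost : ∀ x k, post x k =
      Real.exp (∑ i, β k i * x i) / ∑ j, Real.exp (∑ i, β j i * x i))
    (hlindens : ∀ j : Fin (K + 1), j ≠ Fin.last K →
      ∃ g : ℝ → ℝ≥0∞, ν.map (fun x => ∑ i, β j i * x i)
          = (volume : Measure ℝ).withDensity g ∧ ∀ s, g s ≤ ENNReal.ofReal M)
    (hne : (Finset.univ.erase (Fin.last K)).Nonempty)
    (φK : (Fin p → ℝ) → ℝ)
    (hφK : ∀ x, φK x = c (Fin.last K) * post x (Fin.last K)
      - (Finset.univ.erase (Fin.last K)).sup' hne (fun j => c j * post x j)) :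
    ∃ C₁ : ℝ, 0 < C₁ ∧ ∃ t₀ ∈ Set.Ioo (0:ℝ) 1, ∀ t : ℝ, 0 ≤ t → t ≤ t₀ →
      (ν {x | |φK x| ≤ t}).toReal ≤ C₁ * t := by
  set s := univ.erase (Fin.last K)
  set κ := (c (Fin.last K))⁻¹ + ∑ j ∈ s, (c j)⁻¹
  have hκ : 0 < κ := add_pos_of_pos_of_nonneg (inv_pos.2 (hc _))
    (sum_nonneg fun j _ => (inv_pos.2 (hc j)).le)
  have hs : (0 : ℝ) < #s := by exact_mod_cast hne.card_pos
  refine ⟨#s * M * (2 * (3 * κ)), by positivity, (2 * (κ + 1))⁻¹,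
    ⟨by positivity, inv_lt_one_of_one_lt₀ (by linarith)⟩, fun t ht htt₀ => ?_⟩
  have hsmall : t * κ ≤ 1 / 2 := by
    rw [← one_div, le_div_iff₀ (by positivity)] at htt₀
    nlinarith
  let score (j : Fin (K + 1)) (x : Fin p → ℝ) : ℝ := ∑ i, β j i * x i
  have hsub : {x | |φK x| ≤ t} ⊆ ⋃ j ∈ s, score j ⁻¹'
      Metric.closedBall (log (c (Fin.last K)) - log (c j)) (3 * t * κ) := by
    intro x (hx : |φK x| ≤ t)
    rw [hφK, show post x = softmax (score · x) from funext (hpost x)] at hx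
    obtain ⟨j, hj, hmem⟩ := exists_mem_closedBall_of_abs_margin_le (z := (score · x))
      (by simp [score, hβlast]) hc hne ht hsmall hx
    exact mem_iUnion₂.2 ⟨j, hj, hmem⟩
  refine ENNReal.toReal_le_of_le_ofReal (by positivity) ((measure_mono hsub).trans
    ((measure_biUnion_preimage_closedBall_le s
      (fun j _ => Finset.measurable_sum _ fun i _ => (measurable_pi_apply i).const_mul _) hM.le
      (fun j hj => hlindens j (ne_of_mem_erase hj)) _ (3 * t * κ)).trans_eq ?_))
  congr 1
  ring

/-- Margin condition (exponent 1) under the multinomial logistic model: if the posterior is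
softmax with coefficients `β` (reference class last, `β_K = 0`), costs are positive, `X`
has a Lebesgue density bounded by `M`, and each linear functional `β_jᵀX` has a Lebesgue
density bounded by `M`, then `P(|φ_K(X)| ≤ t) ≤ C₁ t` for all small `t`. -/
theorem stmt13 {p K : ℕ} (hK : 0 < K)
    (M : ℝ) (hM : 0 < M)
    (β : Fin (K + 1) → Fin p → ℝ) (hβlast : β (Fin.last K) = 0)
    (c : Fin (K + 1) → ℝ) (hc : ∀ k, 0 < c k)
    (ν : Measure (Fin p → ℝ)) [IsProbabilityMeasure ν]
    (post : (Fin p → ℝ) → Fin (K + 1) → ℝ)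
    (hpost : ∀ x k, post x k =
      Real.exp (∑ i, β k i * x i) / ∑ j, Real.exp (∑ i, β j i * x i))
    (hXdens : ∃ f : (Fin p → ℝ) → ℝ≥0∞,
      ν = (volume : Measure (Fin p → ℝ)).withDensity f ∧ ∀ x, f x ≤ ENNReal.ofReal M)
    (hlindens : ∀ j : Fin (K + 1), j ≠ Fin.last K →
      ∃ g : ℝ → ℝ≥0∞, ν.map (fun x => ∑ i, β j i * x i)
          = (volume : Measure ℝ).withDensity g ∧ ∀ s, g s ≤ ENNReal.ofReal M)
    (hne : (Finset.univ.erase (Fin.last K)).Nonempty)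
    (φK : (Fin p → ℝ) → ℝ)
    (hφK : ∀ x, φK x = c (Fin.last K) * post x (Fin.last K)
      - (Finset.univ.erase (Fin.last K)).sup' hne (fun j => c j * post x j)) :
    ∃ C₁ : ℝ, 0 < C₁ ∧ ∃ t₀ ∈ Set.Ioo (0:ℝ) 1, ∀ t : ℝ, 0 ≤ t → t ≤ t₀ →
      (ν {x | |φK x| ≤ t}).toReal ≤ C₁ * t :=
  stmt13_general M hM β hβlast c hc ν post hpost hlindens hne φK hφK
end

section
/- Let s_1, …, s_K: 𝒳 → ℝ be fixed measurable scores and costs c_k(λ) = (w_k + λ_k)/π_k affine increasing in λ_k ∈ [0,∞). For t ∈ (0,1], set λ_k(t) = t λ_k^{(0)} + (t−1) w_k for all k ∈ 𝒜 (so that w_k + λ_k(t) = t(w_k + λ_k^{(0)})), and keep c_j fixed for j ∉ 𝒜. Let φ_t(x) = argmax_k c_k(λ(t)) s_k(x). Then for each k ∈ 𝒜, the correct-classification region {x : φ_t(x) = k} is monotone nondecreasing in t; equivalently, the error R_k(φ_t) = P(φ_t(X) ≠ k | Y=k) is nonincreasing in t, for t ∈ [max_{k∈𝒜} w_k(w_k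 + λ_k^{(0)})^{−1}, 1]. -/
open MeasureTheory Set

/-! For `x` classified as `k ∈ 𝒜` at level `t₁`, compare the weighted score of `k` with that of
any rival `j` as `t` grows to `t₂`. A rival in `𝒜` is scaled by the same factor `t`, so its
comparison with `k` (strict or not) is unchanged; a rival outside `𝒜` has a constant score,
while the score of `k` is `t` times a nonnegative number and can only grow. Hence `k` stays a
maximiser, and it stays the least one: a rival tied with `k` at `t₂` was already tied at `t₁`,
where it lost the tie-break. -/

def IsLeastArgmax {ι β : Type*} [LinearOrder ι] [LinearOrder β] (f : ι → β) (i : ι) : Prop :=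
  (∀ j, f j ≤ f i) ∧ ∀ j, f j = f i → i ≤ j

namespace IsLeastArgmax

variable {ι β : Type*} [LinearOrder ι] [LinearOrder β] {f g : ι → β} {i k : ι}

theorem unique (hi : IsLeastArgmax f i) (hk : IsLeastArgmax f k) : i = k :=
  have hfik : f i = f k := le_antisymm (hk.1 i) (hi.1 k)
  le_antisymm (hi.2 k hfik.symm) (hk.2 i hfik)

theorem of_preserves_comparisons (hk : IsLeastArgmax f k)
    (hle : ∀ j, f j ≤ f k → g j ≤ g k) (hlt : ∀ j, f j < f k → g j < g k) :
    IsLeastArgmax g k := by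
  refine ⟨fun j => hle j (hk.1 j), fun j hj => hk.2 j ?_⟩
  by_contra hne
  exact (hlt j ((hk.1 j).lt_of_ne hne)).ne hj

end IsLeastArgmax

noncomputable def scaledCost {K : ℕ} (A : Finset (Fin K)) (π w lam0 : Fin K → ℝ)
    (k : Fin K) (t : ℝ) : ℝ :=
  if k ∈ A then t * (w k + lam0 k) / π k else w k / π k

section scaledCost

variable {K : ℕ} {A : Finset (Fin K)} {π w lam0 σ : Fin K → ℝ} {j k : Fin K} {t t₁ t₂ : ℝ}

theorem scaledCost_mul_of_mem (hj : j ∈ A) :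
    scaledCost A π w lam0 j t * σ j = t * ((w j + lam0 j) / π j * σ j) := by
  rw [scaledCost, if_pos hj]
  ring

theorem scaledCost_of_notMem (hj : j ∉ A) : scaledCost A π w lam0 j t = w j / π j := by
  rw [scaledCost, if_neg hj]

theorem scaledCost_mul_le_of_le (hk : k ∈ A) (hπk : 0 < π k) (hwk : 0 ≤ w k + lam0 k)
    (hσk : 0 ≤ σ k) (ht₁ : 0 < t₁) (h12 : t₁ ≤ t₂) (j : Fin K)
    (h : scaledCost A π w lam0 j t₁ * σ j ≤ scaledCost A π w lam0 k t₁ * σ k) :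
    scaledCost A π w lam0 j t₂ * σ j ≤ scaledCost A π w lam0 k t₂ * σ k := by
  have hv : 0 ≤ (w k + lam0 k) / π k * σ k := by positivity
  rw [scaledCost_mul_of_mem hk] at h ⊢
  by_cases hj : j ∈ A
  · rw [scaledCost_mul_of_mem hj] at h ⊢
    exact mul_le_mul_of_nonneg_left (le_of_mul_le_mul_left h ht₁) (ht₁.trans_le h12).le
  · rw [scaledCost_of_notMem hj] at h ⊢
    exact h.trans (mul_le_mul_of_nonneg_right h12 hv)

theorem scaledCost_mul_lt_of_lt (hk : k ∈ A) (hπk : 0 < π k) (hwk : 0 ≤ w k + lam0 k)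
    (hσk : 0 ≤ σ k) (ht₁ : 0 < t₁) (h12 : t₁ ≤ t₂) (j : Fin K)
    (h : scaledCost A π w lam0 j t₁ * σ j < scaledCost A π w lam0 k t₁ * σ k) :
    scaledCost A π w lam0 j t₂ * σ j < scaledCost A π w lam0 k t₂ * σ k := by
  have hv : 0 ≤ (w k + lam0 k) / π k * σ k := by positivity
  rw [scaledCost_mul_of_mem hk] at h ⊢
  by_cases hj : j ∈ A
  · rw [scaledCost_mul_of_mem hj] at h ⊢
    exact mul_lt_mul_of_pos_left (lt_of_mul_lt_mul_left h ht₁.le) (ht₁.trans_le h12)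
  · rw [scaledCost_of_notMem hj] at h ⊢
    exact h.trans_le (mul_le_mul_of_nonneg_right h12 hv)

end scaledCost

theorem stmt14_general
    {𝒳 : Type*} [MeasurableSpace 𝒳] {K : ℕ}
    (A : Finset (Fin K)) (s : 𝒳 → Fin K → ℝ) (hs : ∀ x k, 0 ≤ s x k)
    (π w lam0 : Fin K → ℝ) (hπ : ∀ k, 0 < π k) (hw : ∀ k, 0 ≤ w k)
    (hlam0 : ∀ k, 0 ≤ lam0 k)
    (c : Fin K → ℝ → ℝ)
    (hcdef : ∀ k t, c k t = if k ∈ A then t * (w k + lam0 k) / π k else w k / π k)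
    (φ : ℝ → 𝒳 → Fin K)
    (hargmax : ∀ t x j, c j t * s x j ≤ c (φ t x) t * s x (φ t x))
    (htie : ∀ t x j, c j t * s x j = c (φ t x) t * s x (φ t x) → φ t x ≤ j)
    (t₁ t₂ : ℝ) (ht₁pos : 0 < t₁)
    (h12 : t₁ ≤ t₂)
    (ν : Fin K → Measure 𝒳) (hν : ∀ k, IsProbabilityMeasure (ν k)) :
    ∀ k ∈ A, ({x | φ t₁ x = k} ⊆ {x | φ t₂ x = k})
      ∧ (ν k {x | φ t₂ x ≠ k}).toReal ≤ (ν k {x | φ t₁ x ≠ k}).toReal := by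
  intro k hk
  obtain rfl : c = scaledCost A π w lam0 := funext₂ hcdef
  have hleast (t : ℝ) (x : 𝒳) :
      IsLeastArgmax (fun j => scaledCost A π w lam0 j t * s x j) (φ t x) :=
    ⟨hargmax t x, htie t x⟩
  have hregion : {x | φ t₁ x = k} ⊆ {x | φ t₂ x = k} := by
    intro x (hx : φ t₁ x = k)
    have hwk : 0 ≤ w k + lam0 k := add_nonneg (hw k) (hlam0 k)
    refine (hleast t₂ x).unique ((hx ▸ hleast t₁ x).of_preserves_comparisons ?_ ?_)
    · exact scaledCost_mul_le_of_le hk (hπ k) hwk (hs x k) ht₁pos h12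
    · exact scaledCost_mul_lt_of_lt hk (hπ k) hwk (hs x k) ht₁pos h12
  have := hν k
  exact ⟨hregion, ENNReal.toReal_mono (measure_ne_top _ _)
    (measure_mono fun x hx hx₁ => hx (hregion hx₁))⟩

/-- Monotonicity of correct-classification regions under the common cost scaling
`c_k(t) = t(w_k+λ⁰_k)/π_k` for `k ∈ 𝒜` (costs of `k ∉ 𝒜` fixed): for the lexicographic
argmax classifier `φ_t`, the region `{x : φ_t(x) = k}` is nondecreasing in `t` for each
`k ∈ 𝒜`, hence the error `R_k(φ_t) = P(φ_t(X) ≠ k | Y=k)` is nonincreasing in `t`. -/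
theorem stmt14
    {𝒳 : Type*} [MeasurableSpace 𝒳] {K : ℕ}
    (A : Finset (Fin K)) (s : 𝒳 → Fin K → ℝ) (hs : ∀ x k, 0 ≤ s x k)
    (π w lam0 : Fin K → ℝ) (hπ : ∀ k, 0 < π k) (hw : ∀ k, 0 ≤ w k)
    (hlam0 : ∀ k, 0 ≤ lam0 k)
    (c : Fin K → ℝ → ℝ)
    (hcdef : ∀ k t, c k t = if k ∈ A then t * (w k + lam0 k) / π k else w k / π k)
    (φ : ℝ → 𝒳 → Fin K)
    (hargmax : ∀ t x j, c j t * s x j ≤ c (φ t x) t * s x (φ t x))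
    (htie : ∀ t x j, c j t * s x j = c (φ t x) t * s x (φ t x) → φ t x ≤ j)
    (t₁ t₂ : ℝ) (ht₁pos : 0 < t₁)
    (hrange : ∀ k ∈ A, w k / (w k + lam0 k) ≤ t₁)
    (h12 : t₁ ≤ t₂) (ht₂ : t₂ ≤ 1)
    (ν : Fin K → Measure 𝒳) (hν : ∀ k, IsProbabilityMeasure (ν k)) :
    ∀ k ∈ A, ({x | φ t₁ x = k} ⊆ {x | φ t₂ x = k})
      ∧ (ν k {x | φ t₂ x ≠ k}).toReal ≤ (ν k {x | φ t₁ x ≠ k}).toReal :=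
  stmt14_general A s hs π w lam0 hπ hw hlam0 c hcdef φ hargmax htie t₁ t₂ ht₁pos h12 ν hν
end
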